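/- arXiv:2601.07636 — 2 statements merged into one kernel-verified Lean document; each statement's English description precedes it below -/
import Mathlib

section
/- Let L : ℝ^d → ℝ be differentiable with β-Lipschitz gradient, and let ρ > 0, 0 < η ≤ 1/β. Fix w ∈ ℝ^d with ∇L(w) ≠ 0, set δ = ρ ∇L(w)/‖∇L(w)‖ and w⁺ = w − η ∇L(w + δ). Then L(w⁺) ≤ L(w) − (η/2)‖∇L(w)‖² + (η/2) β² ρ². -/
/-!
For a function with `β`-Lipschitz gradient, `t ↦ f (x + t u) - t ⟪∇f x, u⟫ - β t² ‖u‖² / 2` has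
nonpositive derivative for `t > 0`, which gives the descent lemma. Applied to an inexact gradient
step `x - η v` with `β η ≤ 1`, it decreases `f` by `η/2 ‖∇f x‖²` up to the error
`η/2 ‖v - ∇f x‖²`. For the sharpness-aware direction `v = ∇L(w + δ)` this error is at most
`η/2 (β ‖δ‖)² ≤ η/2 β² ρ²`, again by the Lipschitz bound.
-/

open scoped Gradient RealInnerProductSpace

section LipschitzGradient

variable {E : Type*} [NormedAddCommGroup E] [InnerProductSpace ℝ E] [CompleteSpace E]
  {f : E → ℝ} {β : ℝ}

theorem hasDerivAt_apply_add_smul_of_differentiable (hf : Differentiable ℝ f) (x u : E) (t : ℝ) :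
    HasDerivAt (fun t : ℝ => f (x + t • u)) ⟪∇ f (x + t • u), u⟫ t := by
  have hline : HasDerivAt (fun t : ℝ => x + t • u) u t := by
    simpa using ((hasDerivAt_id t).smul_const u).const_add x
  exact (hf _).hasGradientAt.hasFDerivAt.comp_hasDerivAt t hline

theorem apply_le_add_inner_gradient_add_sq_of_lipschitz (hf : Differentiable ℝ f)
    (hLip : ∀ x y, ‖∇ f x - ∇ f y‖ ≤ β * ‖x - y‖) (x y : E) :
    f y ≤ f x + ⟪∇ f x, y - x⟫ + β / 2 * ‖y - x‖ ^ 2 := by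
  obtain ⟨u, rfl⟩ : ∃ u, y = x + u := ⟨y - x, by abel⟩
  rw [add_sub_cancel_left]
  let φ : ℝ → ℝ := fun t => f (x + t • u) - t * ⟪∇ f x, u⟫ - β / 2 * t ^ 2 * ‖u‖ ^ 2
  have hφ : ∀ t, HasDerivAt φ (⟪∇ f (x + t • u), u⟫ - ⟪∇ f x, u⟫ - β * t * ‖u‖ ^ 2) t := by
    intro t
    refine (((hasDerivAt_apply_add_smul_of_differentiable hf x u t).sub
      ((hasDerivAt_id' t).mul_const ⟪∇ f x, u⟫)).sub
      (((hasDerivAt_pow 2 t).const_mul (β / 2)).mul_const (‖u‖ ^ 2))).congr_deriv ?_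
    push_cast
    ring
  have hφ_nonpos : ∀ t ∈ interior (Set.Ici (0 : ℝ)),
      ⟪∇ f (x + t • u), u⟫ - ⟪∇ f x, u⟫ - β * t * ‖u‖ ^ 2 ≤ 0 := by
    intro t ht
    rw [interior_Ici, Set.mem_Ioi] at ht
    have hgrad : ‖∇ f (x + t • u) - ∇ f x‖ ≤ β * (t * ‖u‖) := by
      simpa [norm_smul, abs_of_pos ht] using hLip (x + t • u) x
    calc ⟪∇ f (x + t • u), u⟫ - ⟪∇ f x, u⟫ - β * t * ‖u‖ ^ 2
        = ⟪∇ f (x + t • u) - ∇ f x, u⟫ - β * t * ‖u‖ ^ 2 := by rw [inner_sub_left]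
      _ ≤ ‖∇ f (x + t • u) - ∇ f x‖ * ‖u‖ - β * t * ‖u‖ ^ 2 := by
        gcongr; exact real_inner_le_norm _ _
      _ ≤ β * (t * ‖u‖) * ‖u‖ - β * t * ‖u‖ ^ 2 := by gcongr
      _ = 0 := by ring
  have hanti : AntitoneOn φ (Set.Ici 0) :=
    antitoneOn_of_hasDerivWithinAt_nonpos (convex_Ici 0)
      (fun t _ => (hφ t).continuousAt.continuousWithinAt)
      (fun t _ => (hφ t).hasDerivWithinAt) hφ_nonpos
  have h01 : φ 1 ≤ φ 0 := hanti Set.self_mem_Ici (Set.mem_Ici.mpr zero_le_one) zero_le_one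
  simp only [φ, one_smul, zero_smul, add_zero] at h01
  linarith

theorem apply_sub_smul_le_of_lipschitz_gradient (hf : Differentiable ℝ f)
    (hLip : ∀ x y, ‖∇ f x - ∇ f y‖ ≤ β * ‖x - y‖) {η : ℝ} (hη : 0 ≤ η) (hβη : β * η ≤ 1)
    (x v : E) :
    f (x - η • v) ≤ f x - η / 2 * ‖∇ f x‖ ^ 2 + η / 2 * ‖v - ∇ f x‖ ^ 2 := by
  have hdescent := apply_le_add_inner_gradient_add_sq_of_lipschitz hf hLip x (x - η • v)
  rw [sub_sub_cancel_left, inner_neg_right, real_inner_smul_right, norm_neg, norm_smul,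
    Real.norm_of_nonneg hη] at hdescent
  have hquad : β / 2 * (η * ‖v‖) ^ 2 ≤ η / 2 * ‖v‖ ^ 2 := by
    have := mul_le_mul_of_nonneg_right hβη (mul_nonneg hη (sq_nonneg ‖v‖))
    linarith
  have hpolar := norm_sub_sq_real v (∇ f x)
  rw [real_inner_comm] at hpolar
  rw [hpolar]
  linarith

end LipschitzGradient

theorem norm_smul_mul_inv_norm_le {F : Type*} [NormedAddCommGroup F] [NormedSpace ℝ F]
    (ρ : ℝ) (g : F) : ‖(ρ * ‖g‖⁻¹) • g‖ ≤ |ρ| := by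
  rw [norm_smul, norm_mul, norm_inv, norm_norm, Real.norm_eq_abs, mul_assoc]
  exact mul_le_of_le_one_right (abs_nonneg ρ) inv_mul_le_one

theorem sam_one_step_descent_general {d : ℕ} (L : EuclideanSpace ℝ (Fin d) → ℝ)
    (β : ℝ) (hL : Differentiable ℝ L)
    (hLip : ∀ w v : EuclideanSpace ℝ (Fin d),
      ‖gradient L w - gradient L v‖ ≤ β * ‖w - v‖)
    (ρ η : ℝ) (hη : 0 < η) (hηβ : η ≤ 1 / β)
    (w : EuclideanSpace ℝ (Fin d)) :
    L (w - η • gradient L (w + (ρ * ‖gradient L w‖⁻¹) • gradient L w)) ≤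
      L w - (η / 2) * ‖gradient L w‖ ^ 2 + (η / 2) * β ^ 2 * ρ ^ 2 := by
  have hβ : 0 < β := by
    by_contra! hβ
    linarith [one_div_nonpos.mpr hβ]
  set δ := (ρ * ‖∇ L w‖⁻¹) • ∇ L w
  have hgrad_shift : ‖∇ L (w + δ) - ∇ L w‖ ≤ β * |ρ| := by
    calc ‖∇ L (w + δ) - ∇ L w‖ ≤ β * ‖w + δ - w‖ := hLip _ _
      _ ≤ β * |ρ| := by
        rw [add_sub_cancel_left]
        exact mul_le_mul_of_nonneg_left (norm_smul_mul_inv_norm_le ρ _) hβ.le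
  have hgrad_shift_sq : ‖∇ L (w + δ) - ∇ L w‖ ^ 2 ≤ β ^ 2 * ρ ^ 2 := by
    rw [← sq_abs ρ, ← mul_pow]
    exact pow_le_pow_left₀ (norm_nonneg _) hgrad_shift 2
  have hβη : β * η ≤ 1 := by
    rw [le_div_iff₀ hβ] at hηβ
    linarith
  calc L (w - η • ∇ L (w + δ))
      ≤ L w - η / 2 * ‖∇ L w‖ ^ 2 + η / 2 * ‖∇ L (w + δ) - ∇ L w‖ ^ 2 :=
        apply_sub_smul_le_of_lipschitz_gradient hL hLip hη.le hβη w _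
    _ ≤ L w - η / 2 * ‖∇ L w‖ ^ 2 + η / 2 * β ^ 2 * ρ ^ 2 := by
        rw [mul_assoc (η / 2)]
        gcongr

/-- One-step descent inequality for the sharpness-aware (zeroth-order) update:
if L has β-Lipschitz gradient, δ = ρ ∇L(w)/‖∇L(w)‖ and w⁺ = w − η ∇L(w+δ) with
0 < η ≤ 1/β, then L(w⁺) ≤ L(w) − (η/2)‖∇L(w)‖² + (η/2)β²ρ². -/
theorem sam_one_step_descent {d : ℕ} (L : EuclideanSpace ℝ (Fin d) → ℝ)
    (β : ℝ) (hL : Differentiable ℝ L)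
    (hLip : ∀ w v : EuclideanSpace ℝ (Fin d),
      ‖gradient L w - gradient L v‖ ≤ β * ‖w - v‖)
    (ρ η : ℝ) (hρ : 0 < ρ) (hη : 0 < η) (hηβ : η ≤ 1 / β)
    (w : EuclideanSpace ℝ (Fin d)) (hgw : gradient L w ≠ 0) :
    L (w - η • gradient L (w + (ρ * ‖gradient L w‖⁻¹) • gradient L w)) ≤
      L w - (η / 2) * ‖gradient L w‖ ^ 2 + (η / 2) * β ^ 2 * ρ ^ 2 :=
  sam_one_step_descent_general L β hL hLip ρ η hη hηβ w
end

section
/- Let M > 0, β > 0, η > 0, ρ > 0, and let (a_i)_{i≥1} and (ℓ_i)_{i≥1} be sequences of real numbers with a_i ≥ 0, |ℓ_i| ≤ M for all i, and satisfying for all i ≥ 1 the recursion ℓ_{i+1} ≤ ℓ_i − (η_i/2) a_i + (η_i/2) β² ρ_i², where η_i = η/√i and ρ_i = ρ/i^{1/4}. Then for every n ≥ 1, (1/n) ∑_{i=1}^{n} a_i ≤ 4M/(η √n) + β²ρ² (1 + log n)/√n. -/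
/-!
Summing the descent inequality over `i = 1, …, n` telescopes the losses to `ℓ₁ - ℓₙ₊₁ ≤ 2M`.
The step sizes `η/√i` are all at least `η/√n`, so the descent terms dominate
`η/(2√n) ∑ aᵢ`, while `ηᵢ ρᵢ² = ηρ²/i` turns the perturbation terms into a harmonic sum,
bounded by `1 + log n`. Dividing by `n η/(2√n)` gives the rate.
-/

open Real Finset

lemma sum_Ico_le_sub_add_of_le_sub_add {α : Type*} [AddCommGroup α] [PartialOrder α]
    [IsOrderedAddMonoid α] {ℓ c d : ℕ → α} {m n : ℕ} (hmn : m ≤ n)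
    (h : ∀ i ∈ Ico m n, ℓ (i + 1) ≤ ℓ i - c i + d i) :
    ∑ i ∈ Ico m n, c i ≤ ℓ m - ℓ n + ∑ i ∈ Ico m n, d i := by
  calc ∑ i ∈ Ico m n, c i
      ≤ ∑ i ∈ Ico m n, (-(ℓ (i + 1) - ℓ i) + d i) :=
        sum_le_sum fun i hi => by
          convert add_le_add_left (h i hi) (c i - ℓ (i + 1)) using 1 <;> abel
    _ = ℓ m - ℓ n + ∑ i ∈ Ico m n, d i := by
        rw [sum_add_distrib, sum_neg_distrib, sum_Ico_sub ℓ hmn, neg_sub]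

lemma mul_sum_le_sum_mul_of_le {ι R : Type*} [Semiring R] [PartialOrder R]
    [IsOrderedRing R] {s : Finset ι} {c : R} {w a : ι → R}
    (hw : ∀ i ∈ s, c ≤ w i) (ha : ∀ i ∈ s, 0 ≤ a i) :
    c * ∑ i ∈ s, a i ≤ ∑ i ∈ s, w i * a i := by
  rw [mul_sum]
  exact sum_le_sum fun i hi => mul_le_mul_of_nonneg_right (hw i hi) (ha i hi)

lemma sum_Icc_one_div_le_one_add_log (n : ℕ) :
    ∑ i ∈ Icc 1 n, (1 : ℝ) / i ≤ 1 + Real.log n := by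
  simpa [harmonic_eq_sum_Icc] using harmonic_le_one_add_log n

lemma rpow_one_div_four_sq {x : ℝ} (hx : 0 ≤ x) : (x ^ ((1 : ℝ) / 4)) ^ 2 = √x := by
  rw [← rpow_natCast, ← rpow_mul hx, sqrt_eq_rpow]
  norm_num

lemma step_mul_sq_radius_eq {η β ρ x : ℝ} (hx : 0 < x) :
    η / √x / 2 * β ^ 2 * (ρ / x ^ ((1 : ℝ) / 4)) ^ 2 = η * β ^ 2 * ρ ^ 2 / 2 * (1 / x) := by
  have : 0 < √x := sqrt_pos.mpr hx
  rw [div_pow, rpow_one_div_four_sq hx.le]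
  field_simp
  rw [sq_sqrt hx.le]
  ring

theorem flad_telescoping_rate_general (M β η ρ : ℝ) (hη : 0 < η) (a ℓ : ℕ → ℝ)
    (ha : ∀ i : ℕ, 1 ≤ i → 0 ≤ a i)
    (hℓ : ∀ i : ℕ, 1 ≤ i → |ℓ i| ≤ M)
    (hrec : ∀ i : ℕ, 1 ≤ i →
      ℓ (i + 1) ≤ ℓ i - (η / Real.sqrt i / 2) * a i +
        (η / Real.sqrt i / 2) * β ^ 2 * (ρ / (i : ℝ) ^ ((1 : ℝ) / 4)) ^ 2) :
    ∀ n : ℕ, 1 ≤ n →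
      (1 / (n : ℝ)) * ∑ i ∈ Finset.Icc 1 n, a i ≤
        4 * M / (η * Real.sqrt n) + β ^ 2 * ρ ^ 2 * (1 + Real.log n) / Real.sqrt n := by
  intro n hn
  have htel := sum_Ico_le_sub_add_of_le_sub_add (by omega : 1 ≤ n + 1)
    fun i hi => hrec i (mem_Ico.mp hi).1
  rw [Ico_add_one_right_eq_Icc] at htel
  have hdescent : η / √n / 2 * ∑ i ∈ Icc 1 n, a i ≤ ∑ i ∈ Icc 1 n, η / √i / 2 * a i :=
    mul_sum_le_sum_mul_of_le (fun i hi => by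
        obtain ⟨hi1, hin⟩ := mem_Icc.mp hi
        have : (0 : ℝ) < i := by exact_mod_cast hi1
        gcongr)
      fun i hi => ha i (mem_Icc.mp hi).1
  have hperturbation : ∑ i ∈ Icc 1 n, η / √i / 2 * β ^ 2 * (ρ / (i : ℝ) ^ ((1 : ℝ) / 4)) ^ 2
      ≤ η * β ^ 2 * ρ ^ 2 / 2 * (1 + Real.log n) := by
    rw [sum_congr rfl fun i hi => step_mul_sq_radius_eq (by exact_mod_cast (mem_Icc.mp hi).1),
      ← mul_sum]
    gcongr
    exact sum_Icc_one_div_le_one_add_log n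
  have hℓ₁ := abs_le.mp (hℓ 1 le_rfl)
  have hℓₙ := abs_le.mp (hℓ (n + 1) (by omega))
  have hn₀ : (0 : ℝ) < n := by exact_mod_cast hn
  have hsqrt : (0 : ℝ) < √n := sqrt_pos.mpr hn₀
  calc 1 / (n : ℝ) * ∑ i ∈ Icc 1 n, a i
      = 2 / (η * √n) * (η / √n / 2 * ∑ i ∈ Icc 1 n, a i) := by
        field_simp
        rw [sq_sqrt hn₀.le, mul_comm]
    _ ≤ 2 / (η * √n) * (2 * M + η * β ^ 2 * ρ ^ 2 / 2 * (1 + Real.log n)) := by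
        gcongr
        linarith
    _ = 4 * M / (η * √n) + β ^ 2 * ρ ^ 2 * (1 + Real.log n) / √n := by
        field_simp
        ring

/-- Telescoping lemma for the convergence rate of Theorem 1: from the per-step descent
inequality ℓ_{i+1} ≤ ℓ_i − (η_i/2)a_i + (η_i/2)β²ρ_i² with η_i = η/√i, ρ_i = ρ/i^{1/4},
a_i ≥ 0 and |ℓ_i| ≤ M, it follows that
(1/n) ∑_{i=1}^n a_i ≤ 4M/(η√n) + β²ρ²(1 + log n)/√n. -/
theorem flad_telescoping_rate (M β η ρ : ℝ) (hM : 0 < M) (hβ : 0 < β) (hη : 0 < η)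
    (hρ : 0 < ρ) (a ℓ : ℕ → ℝ)
    (ha : ∀ i : ℕ, 1 ≤ i → 0 ≤ a i)
    (hℓ : ∀ i : ℕ, 1 ≤ i → |ℓ i| ≤ M)
    (hrec : ∀ i : ℕ, 1 ≤ i →
      ℓ (i + 1) ≤ ℓ i - (η / Real.sqrt i / 2) * a i +
        (η / Real.sqrt i / 2) * β ^ 2 * (ρ / (i : ℝ) ^ ((1 : ℝ) / 4)) ^ 2) :
    ∀ n : ℕ, 1 ≤ n →
      (1 / (n : ℝ)) * ∑ i ∈ Finset.Icc 1 n, a i ≤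
        4 * M / (η * Real.sqrt n) + β ^ 2 * ρ ^ 2 * (1 + Real.log n) / Real.sqrt n :=
  flad_telescoping_rate_general M β η ρ hη a ℓ ha hℓ hrec
end
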